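/- The split S = {x ∈ ℝ² : 0 ≤ x₂ ≤ 1} is lattice-free (its interior contains no integer point), and for any sequence of lattice-free convex bodies approximating it, the value p(K) − 4R(K) approaches 2; concretely, for K_n = [−n,n] × [0,1], p(K_n) − 4R(K_n) = 4n + 2 − 2√(4n²+1) → 2 as n → ∞. -/

import Mathlib

/-!
The interior of the strip is the open strip `0 < x₂ < 1`, which contains no integer point.
The boundary of `[a, b] × [c, d]` is the disjoint union of four half-open edges, each an
isometric copy of an interval, so its one-dimensional Hausdorff measure is `2(b - a) + 2(d - c)`.
The disc about the centre with the half-diagonal as radius covers the rectangle, and no smaller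
disc can, since two opposite corners are a diagonal apart. For `K_n` this gives
`p - 4R = 4n + 2 - 2√(4n² + 1)`, and `√(4n² + 1) - 2n → 0`.
-/

open MeasureTheory Metric Set Filter
open scoped Topology RealInnerProductSpace

noncomputable def perim (K : Set (EuclideanSpace ℝ (Fin 2))) : ℝ :=
  (μH[1] (frontier K)).toReal

noncomputable def circum (K : Set (EuclideanSpace ℝ (Fin 2))) : ℝ :=
  sInf {r : ℝ | ∃ c, K ⊆ Metric.closedBall c r}

noncomputable def inrad (K : Set (EuclideanSpace ℝ (Fin 2))) : ℝ :=
  sSup {r : ℝ | ∃ c, Metric.closedBall c r ⊆ K}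

noncomputable def minWidth (K : Set (EuclideanSpace ℝ (Fin 2))) : ℝ :=
  sInf {w : ℝ | ∃ u : EuclideanSpace ℝ (Fin 2), ‖u‖ = 1 ∧
    w = sSup ((fun x => ⟪u, x⟫) '' K) - sInf ((fun x => ⟪u, x⟫) '' K)}

def LatticeFree (K : Set (EuclideanSpace ℝ (Fin 2))) : Prop :=
  ∀ m n : ℤ, (WithLp.toLp 2 ![(m : ℝ), (n : ℝ)] : EuclideanSpace ℝ (Fin 2)) ∉ interior K

def Unconditional (K : Set (EuclideanSpace ℝ (Fin 2))) (z : EuclideanSpace ℝ (Fin 2)) : Prop :=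
  (∀ x ∈ K, (WithLp.toLp 2 ![x 0, 2 * z 1 - x 1] : EuclideanSpace ℝ (Fin 2)) ∈ K) ∧
  (∀ x ∈ K, (WithLp.toLp 2 ![2 * z 0 - x 0, x 1] : EuclideanSpace ℝ (Fin 2)) ∈ K)

theorem interior_setOf_apply_mem {ι : Type*} [Fintype ι] (i : ι) (s : Set ℝ) :
    interior {x : EuclideanSpace ℝ ι | x i ∈ s} = {x | x i ∈ interior s} := by
  classical
  let π : EuclideanSpace ℝ ι →L[ℝ] ℝ := EuclideanSpace.proj i
  have hπ : Function.Surjective π := fun t => ⟨EuclideanSpace.single i t, by simp [π]⟩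
  exact ((π.isOpenMap hπ).preimage_interior_eq_interior_preimage π.continuous s).symm

theorem EuclideanSpace.dist_eq_fin_two (x y : EuclideanSpace ℝ (Fin 2)) :
    dist x y = √((x 0 - y 0) ^ 2 + (x 1 - y 1) ^ 2) := by
  simp [EuclideanSpace.dist_eq, Fin.sum_univ_two, Real.dist_eq, sq_abs]

theorem latticeFree_setOf_apply_one_mem_Icc (k : ℤ) :
    LatticeFree {x | x 1 ∈ Icc (k : ℝ) (k + 1)} := by
  intro m n hn
  rw [interior_setOf_apply_mem, interior_Icc] at hn
  obtain ⟨hkn, hnk⟩ : (k : ℝ) < n ∧ (n : ℝ) < k + 1 := hn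
  norm_cast at hkn hnk
  omega

def rect (a b c d : ℝ) : Set (EuclideanSpace ℝ (Fin 2)) :=
  {x | x 0 ∈ Icc a b ∧ x 1 ∈ Icc c d}

theorem isClosed_rect (a b c d : ℝ) : IsClosed (rect a b c d) :=
  (isClosed_Icc.preimage (EuclideanSpace.proj 0).continuous).inter
    (isClosed_Icc.preimage (EuclideanSpace.proj 1).continuous)

theorem interior_rect (a b c d : ℝ) :
    interior (rect a b c d) = {x | x 0 ∈ Ioo a b ∧ x 1 ∈ Ioo c d} := by
  rw [rect, ofPred_and, interior_inter, interior_setOf_apply_mem, interior_setOf_apply_mem,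
    interior_Icc, interior_Icc, ofPred_and]

def horizontalLine (c : ℝ) (t : ℝ) : EuclideanSpace ℝ (Fin 2) := !₂[t, c]

def verticalLine (c : ℝ) (t : ℝ) : EuclideanSpace ℝ (Fin 2) := !₂[c, t]

theorem isometry_horizontalLine (c : ℝ) : Isometry (horizontalLine c) :=
  Isometry.of_dist_eq fun s t => by
    simp [horizontalLine, EuclideanSpace.dist_eq_fin_two, Real.dist_eq, Real.sqrt_sq_eq_abs]

theorem isometry_verticalLine (c : ℝ) : Isometry (verticalLine c) :=
  Isometry.of_dist_eq fun s t => by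
    simp [verticalLine, EuclideanSpace.dist_eq_fin_two, Real.dist_eq, Real.sqrt_sq_eq_abs]

theorem mem_image_horizontalLine {c : ℝ} {s : Set ℝ} {x : EuclideanSpace ℝ (Fin 2)} :
    x ∈ horizontalLine c '' s ↔ x 0 ∈ s ∧ x 1 = c := by
  refine ⟨fun ⟨t, ht, hx⟩ => hx ▸ ⟨ht, rfl⟩, fun ⟨h0, h1⟩ => ⟨x 0, h0, ?_⟩⟩
  ext i
  fin_cases i <;> simp [horizontalLine, h1]

theorem mem_image_verticalLine {c : ℝ} {s : Set ℝ} {x : EuclideanSpace ℝ (Fin 2)} :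
    x ∈ verticalLine c '' s ↔ x 0 = c ∧ x 1 ∈ s := by
  refine ⟨fun ⟨t, ht, hx⟩ => hx ▸ ⟨rfl, ht⟩, fun ⟨h0, h1⟩ => ⟨x 1, h1, ?_⟩⟩
  ext i
  fin_cases i <;> simp [verticalLine, h0]

theorem frontier_rect {a b c d : ℝ} (hab : a < b) (hcd : c < d) :
    frontier (rect a b c d) =
      horizontalLine c '' Ico a b ∪ verticalLine b '' Ico c d ∪
        horizontalLine d '' Ioc a b ∪ verticalLine a '' Ioc c d := by
  rw [(isClosed_rect a b c d).frontier_eq, interior_rect]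
  ext x
  simp only [rect, Set.mem_sdiff, mem_ofPred_eq, mem_union, mem_image_horizontalLine,
    mem_image_verticalLine, mem_Icc, mem_Ico, mem_Ioc, mem_Ioo]
  generalize x 0 = u, x 1 = v
  grind

theorem hausdorffMeasure_frontier_rect {a b c d : ℝ} (hab : a < b) (hcd : c < d) :
    μH[1] (frontier (rect a b c d)) = ENNReal.ofReal (2 * (b - a) + 2 * (d - c)) := by
  have edge {f : ℝ → EuclideanSpace ℝ (Fin 2)} (hf : Isometry f) {s : Set ℝ}
      (hs : MeasurableSet s) : MeasurableSet (f '' s) ∧ μH[1] (f '' s) = volume s :=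
    ⟨hf.isClosedEmbedding.measurableEmbedding.measurableSet_image.2 hs,
      by rw [hf.hausdorffMeasure_image (Or.inl zero_le_one), hausdorffMeasure_real]⟩
  obtain ⟨hm₁, hμ₁⟩ := edge (isometry_horizontalLine c) (measurableSet_Ico (a := a) (b := b))
  obtain ⟨hm₂, hμ₂⟩ := edge (isometry_verticalLine b) (measurableSet_Ico (a := c) (b := d))
  obtain ⟨hm₃, hμ₃⟩ := edge (isometry_horizontalLine d) (measurableSet_Ioc (a := a) (b := b))
  obtain ⟨hm₄, hμ₄⟩ := edge (isometry_verticalLine a) (measurableSet_Ioc (a := c) (b := d))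
  rw [frontier_rect hab hcd, measure_union ?_ hm₄, measure_union ?_ hm₃, measure_union ?_ hm₂,
    hμ₁, hμ₂, hμ₃, hμ₄, Real.volume_Ico, Real.volume_Ico, Real.volume_Ioc, Real.volume_Ioc,
    ← ENNReal.ofReal_add (by linarith) (by linarith),
    ← ENNReal.ofReal_add (by linarith) (by linarith),
    ← ENNReal.ofReal_add (by linarith) (by linarith)]
  · congr 1; ring
  all_goals
    simp only [disjoint_left, mem_union, mem_image_horizontalLine, mem_image_verticalLine,
      mem_Ico, mem_Ioc]
    grind

theorem perim_rect {a b c d : ℝ} (hab : a < b) (hcd : c < d) :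
    perim (rect a b c d) = 2 * (b - a) + 2 * (d - c) := by
  rw [perim, hausdorffMeasure_frontier_rect hab hcd, ENNReal.toReal_ofReal (by linarith)]

theorem circum_rect {a b c d : ℝ} (hab : a ≤ b) (hcd : c ≤ d) :
    circum (rect a b c d) = √((b - a) ^ 2 + (d - c) ^ 2) / 2 := by
  refine IsLeast.csInf_eq ⟨⟨!₂[(a + b) / 2, (c + d) / 2], fun x ⟨⟨hxa, hxb⟩, hxc, hxd⟩ => ?_⟩, ?_⟩
  · rw [mem_closedBall, EuclideanSpace.dist_eq_fin_two, Real.sqrt_le_iff, div_pow,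
      Real.sq_sqrt (by positivity)]
    refine ⟨by positivity, ?_⟩
    simp only [Matrix.cons_val_zero, Matrix.cons_val_one]
    nlinarith
  · rintro r ⟨z, hz⟩
    have hp : !₂[a, c] ∈ rect a b c d := ⟨⟨le_rfl, hab⟩, le_rfl, hcd⟩
    have hq : !₂[b, d] ∈ rect a b c d := ⟨⟨hab, le_rfl⟩, hcd, le_rfl⟩
    have hpq : dist !₂[a, c] !₂[b, d] = √((b - a) ^ 2 + (d - c) ^ 2) := by
      rw [EuclideanSpace.dist_eq_fin_two]
      simp only [Matrix.cons_val_zero, Matrix.cons_val_one]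
      ring_nf
    have := dist_triangle_right (!₂[a, c] : EuclideanSpace ℝ (Fin 2)) !₂[b, d] z
    linarith [mem_closedBall.1 (hz hp), mem_closedBall.1 (hz hq)]

theorem tendsto_four_mul_add_two_sub_two_mul_sqrt :
    Tendsto (fun n : ℕ => 4 * (n : ℝ) + 2 - 2 * √(4 * (n : ℝ) ^ 2 + 1)) atTop (𝓝 2) := by
  have hgap : Tendsto (fun n : ℕ => √(4 * (n : ℝ) ^ 2 + 1) - 2 * n) atTop (𝓝 0) := by
    refine squeeze_zero' (Eventually.of_forall fun n => ?_) ?_ tendsto_one_div_atTop_nhds_zero_nat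
    · rw [sub_nonneg]
      exact Real.le_sqrt_of_sq_le (by nlinarith)
    · filter_upwards [eventually_ge_atTop 1] with n hn
      have hn : (1 : ℝ) ≤ n := by exact_mod_cast hn
      rw [sub_le_iff_le_add', Real.sqrt_le_iff]
      refine ⟨by positivity, ?_⟩
      have : 0 < 1 / (n : ℝ) := by positivity
      nlinarith [mul_one_div_cancel (by positivity : (n : ℝ) ≠ 0)]
  convert (tendsto_const_nhds (x := (2 : ℝ))).sub (hgap.const_mul 2) using 2 <;> ring

theorem stmt_18 (S : Set (EuclideanSpace ℝ (Fin 2)))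
    (hS : S = {x | 0 ≤ x 1 ∧ x 1 ≤ 1})
    (K : ℕ → Set (EuclideanSpace ℝ (Fin 2)))
    (hK : ∀ n, K n = {x | x 0 ∈ Icc (-(n : ℝ)) (n : ℝ) ∧ x 1 ∈ Icc (0 : ℝ) 1}) :
    LatticeFree S ∧
      (∀ n : ℕ, 1 ≤ n →
        perim (K n) - 4 * circum (K n) =
          4 * (n : ℝ) + 2 - 2 * Real.sqrt (4 * (n : ℝ) ^ 2 + 1)) ∧
      Tendsto (fun n : ℕ => perim (K n) - 4 * circum (K n)) atTop (𝓝 2) := by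
  have hKn (n : ℕ) (hn : 1 ≤ n) :
      perim (K n) - 4 * circum (K n) = 4 * (n : ℝ) + 2 - 2 * √(4 * (n : ℝ) ^ 2 + 1) := by
    have hn₀ : (0 : ℝ) < n := by exact_mod_cast hn
    rw [hK n, ← rect, perim_rect (by linarith) one_pos, circum_rect (by linarith) zero_le_one]
    ring_nf
  refine ⟨?_, hKn, ?_⟩
  · simpa [hS] using latticeFree_setOf_apply_one_mem_Icc 0
  · exact tendsto_four_mul_add_two_sub_two_mul_sqrt.congr'
      (eventually_atTop.2 ⟨1, fun n hn => (hKn n hn).symm⟩)
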